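/- arXiv:1606.02679 — 3 statements merged into one kernel-verified Lean document; each statement's English description precedes it below -/
import Mathlib

section
/- (Strong duality between the primal QP (9) and the dual (10).) Let D, N be positive integers, ε ≥ 0, ρ > 0, K ∈ ℝ^{D×D} symmetric positive semidefinite, Φ₀ ∈ ℝ^{D×N}, y ∈ ℝ^N, and set K₀ := Φ₀ᵀ K Φ₀. Then the infimum of ∑_{n=1}^N (ξ_n + ζ_n) + ρ cᵀ K c over all (c, ξ, ζ) ∈ ℝ^D × ℝ^N × ℝ^N satisfying ξ ≥ y − Φ₀ᵀKc − ε1_N, ξ ≥ 0, ζ ≥ −y + Φ₀ᵀKc − ε1_N, ζ ≥ 0 (entrywise) equals the negative of the infimum of (1/(4ρ)) (α−β)ᵀ K₀ (α−β) − (y − ε1_N)ᵀ α + (y + ε1_N)ᵀ β over all α, β ∈ ℝ^N with 0 ≤ α ≤ 1_N and 0 ≤ β ≤ 1_N (entrywise). -/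
/-!
The dual objective is continuous, so it attains its minimum on the compact box
`[0,1]ᴺ × [0,1]ᴺ` at some `(α, β)`. After eliminating the slack variables, the Lagrangian of (9)
is minus the dual objective plus `(4ρ)⁻¹ wᵀ K w` with `w = 2ρ c - Φ₀ (α - β)`; as `K ⪰ 0` this
gives weak duality. Minimality of `(α, β)` along each coordinate direction of the box gives
complementary slackness: `αₙ rₙ = max rₙ 0` for the residual `rₙ = yₙ - (Φ₀ᵀ K c)ₙ - ε` at
`c = Φ₀ (α - β) / (2ρ)`, and likewise for `β`. So this `c`, with the slacks equal to the positive
parts of the residuals, is a primal point whose value is minus the dual minimum.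
-/

open Matrix Finset

lemma nonpos_of_forall_mul_sq_sub_mul_nonneg {a t u : ℝ} (ha : 0 ≤ a) (hu : 0 < u)
    (h : ∀ s, 0 < s → s ≤ u → 0 ≤ a * s ^ 2 - t * s) : t ≤ 0 := by
  by_contra! ht
  -- for `0 < s ≤ t / (a + 1)` we get `a * s < t`, so `a * s ^ 2 - t * s = s * (a * s - t) < 0`
  set s := min u (t / (a + 1))
  have hs : 0 < s := lt_min hu (by positivity)
  have has : a * s < t := calc
    a * s ≤ a * (t / (a + 1)) := mul_le_mul_of_nonneg_left (min_le_right _ _) ha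
    _ < t := by rw [mul_div_assoc', div_lt_iff₀ (by linarith)]; linarith
  nlinarith [h s hs (min_le_left _ _)]

lemma mul_eq_max_zero_of_forall_mul_sq_sub_mul_nonneg {a t x : ℝ} (ha : 0 ≤ a)
    (hx : x ∈ Set.Icc (0 : ℝ) 1) (h : ∀ s, x + s ∈ Set.Icc (0 : ℝ) 1 → 0 ≤ a * s ^ 2 - t * s) :
    x * t = max t 0 := by
  have hlt : x < 1 → t ≤ 0 := fun hx1 =>
    nonpos_of_forall_mul_sq_sub_mul_nonneg ha (sub_pos.2 hx1) fun s hs hsu =>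
      h s ⟨by linarith [hx.1], by linarith⟩
  have hpos : 0 < x → 0 ≤ t := fun hx0 => neg_nonpos.1 <|
    nonpos_of_forall_mul_sq_sub_mul_nonneg ha hx0 fun s hs hsu => by
      have := h (-s) ⟨by linarith, by linarith [hx.2]⟩
      linarith
  rcases lt_trichotomy t 0 with ht | rfl | ht
  · obtain rfl : x = 0 := le_antisymm (not_lt.1 fun hx0 => (hpos hx0).not_gt ht) hx.1
    simp [ht.le]
  · simp
  · obtain rfl : x = 1 := le_antisymm hx.2 (not_lt.1 fun hx1 => (hlt hx1).not_gt ht)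
    simp [ht.le]

lemma Pi.add_single_mem_Icc {n : Type*} [DecidableEq n] {a b x : n → ℝ} (hx : x ∈ Set.Icc a b)
    {i : n} {s : ℝ} (hs : x i + s ∈ Set.Icc (a i) (b i)) : x + Pi.single i s ∈ Set.Icc a b := by
  refine ⟨fun j => ?_, fun j => ?_⟩ <;> rcases eq_or_ne j i with rfl | hj
  · simpa using hs.1
  · simpa [hj] using hx.1 j
  · simpa using hs.2
  · simpa [hj] using hx.2 j

namespace Matrix

variable {m n : Type*} [Fintype m] [Fintype n]

lemma dotProduct_mulVec_comm_of_isSymm {R : Type*} [CommSemiring R] {K : Matrix n n R}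
    (hK : K.IsSymm) (x y : n → R) : x ⬝ᵥ K *ᵥ y = y ⬝ᵥ K *ᵥ x := by
  simpa only [hK.eq] using dotProduct_transpose_mulVec K x y

lemma dotProduct_transpose_mul_mulVec {R : Type*} [CommSemiring R] (Φ : Matrix m n R)
    (K : Matrix m m R) (u : n → R) (x : m → R) : u ⬝ᵥ (Φᵀ * K) *ᵥ x = (Φ *ᵥ u) ⬝ᵥ K *ᵥ x := by
  rw [← mulVec_mulVec, dotProduct_mulVec (A := Φᵀ), vecMul_transpose]

lemma dotProduct_transpose_mul_mul_mulVec {R : Type*} [CommSemiring R] (Φ : Matrix m n R)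
    (K : Matrix m m R) (u : n → R) : u ⬝ᵥ (Φᵀ * K * Φ) *ᵥ u = (Φ *ᵥ u) ⬝ᵥ K *ᵥ (Φ *ᵥ u) := by
  rw [← mulVec_mulVec, dotProduct_transpose_mul_mulVec]

lemma add_single_dotProduct_mulVec_add_single {R : Type*} [CommRing R] [DecidableEq n]
    {M : Matrix n n R} (hM : M.IsSymm) (u : n → R) (i : n) (s : R) :
    (u + Pi.single i s) ⬝ᵥ M *ᵥ (u + Pi.single i s) =
      u ⬝ᵥ M *ᵥ u + 2 * s * (M *ᵥ u) i + s ^ 2 * M i i := by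
  rw [add_dotProduct, mulVec_add, dotProduct_add, dotProduct_add,
    dotProduct_mulVec_comm_of_isSymm hM u (Pi.single i s)]
  simp only [single_dotProduct, mulVec_single, Pi.smul_apply, op_smul_eq_mul, col_apply]
  ring

lemma dotProduct_mulVec_complete_square {K : Matrix n n ℝ} (hK : K.IsSymm) {ρ : ℝ} (hρ : ρ ≠ 0)
    (c w : n → ℝ) :
    ρ * (c ⬝ᵥ K *ᵥ c) - w ⬝ᵥ K *ᵥ c =
      1 / (4 * ρ) * (((2 * ρ) • c - w) ⬝ᵥ K *ᵥ ((2 * ρ) • c - w)) -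
        1 / (4 * ρ) * (w ⬝ᵥ K *ᵥ w) := by
  simp only [sub_dotProduct, dotProduct_sub, mulVec_sub, mulVec_smul, smul_dotProduct,
    dotProduct_smul, smul_eq_mul, dotProduct_mulVec_comm_of_isSymm hK c w]
  field_simp
  ring

end Matrix

noncomputable section SVM

variable {m n : Type*} [Fintype m] [Fintype n] {ε ρ : ℝ}

def svmDualObjective (ε ρ : ℝ) (K₀ : Matrix n n ℝ) (y α β : n → ℝ) : ℝ :=
  1 / (4 * ρ) * ((α - β) ⬝ᵥ K₀ *ᵥ (α - β)) - (fun i => y i - ε) ⬝ᵥ α + (fun i => y i + ε) ⬝ᵥ β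

def SvmPrimalFeasible (ε : ℝ) (K : Matrix m m ℝ) (Φ : Matrix m n ℝ) (y : n → ℝ) (c : m → ℝ)
    (ξ ζ : n → ℝ) : Prop :=
  ∀ i, y i - ((Φᵀ * K) *ᵥ c) i - ε ≤ ξ i ∧ 0 ≤ ξ i ∧
    -(y i) + ((Φᵀ * K) *ᵥ c) i - ε ≤ ζ i ∧ 0 ≤ ζ i

def svmPrimalValues (ε ρ : ℝ) (K : Matrix m m ℝ) (Φ : Matrix m n ℝ) (y : n → ℝ) : Set ℝ :=
  {v | ∃ (c : m → ℝ) (ξ ζ : n → ℝ),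
    v = ∑ i, (ξ i + ζ i) + ρ * (c ⬝ᵥ K *ᵥ c) ∧ SvmPrimalFeasible ε K Φ y c ξ ζ}

def svmDualValues (ε ρ : ℝ) (K₀ : Matrix n n ℝ) (y : n → ℝ) : Set ℝ :=
  {v | ∃ α β : n → ℝ, v = svmDualObjective ε ρ K₀ y α β ∧
    (∀ i, 0 ≤ α i ∧ α i ≤ 1) ∧ (∀ i, 0 ≤ β i ∧ β i ≤ 1)}

/-- The Lagrangian of (9), with the slack variables eliminated: the multipliers of `ξ ≥ 0` and
`ζ ≥ 0` are `1 - α` and `1 - β`. -/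
def svmLagrangian (ε ρ : ℝ) (K : Matrix m m ℝ) (Φ : Matrix m n ℝ) (y : n → ℝ) (c : m → ℝ)
    (α β : n → ℝ) : ℝ :=
  ∑ i, (α i * (y i - ((Φᵀ * K) *ᵥ c) i - ε) + β i * (-(y i) + ((Φᵀ * K) *ᵥ c) i - ε)) +
    ρ * (c ⬝ᵥ K *ᵥ c)

lemma svmLagrangian_eq {K : Matrix m m ℝ} (hK : K.IsSymm) (hρ : ρ ≠ 0) (Φ : Matrix m n ℝ)
    (y : n → ℝ) (c : m → ℝ) (α β : n → ℝ) :
    svmLagrangian ε ρ K Φ y c α β = -svmDualObjective ε ρ (Φᵀ * K * Φ) y α β +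
      1 / (4 * ρ) * (((2 * ρ) • c - Φ *ᵥ (α - β)) ⬝ᵥ K *ᵥ ((2 * ρ) • c - Φ *ᵥ (α - β))) := by
  have hsum : ∑ i, (α i * (y i - ((Φᵀ * K) *ᵥ c) i - ε) +
      β i * (-(y i) + ((Φᵀ * K) *ᵥ c) i - ε)) =
      (fun i => y i - ε) ⬝ᵥ α - (fun i => y i + ε) ⬝ᵥ β - (α - β) ⬝ᵥ (Φᵀ * K) *ᵥ c := by
    simp only [dotProduct, Pi.sub_apply, ← sum_sub_distrib]
    exact sum_congr rfl fun i _ => by ring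
  rw [svmLagrangian, hsum, dotProduct_transpose_mul_mulVec, svmDualObjective,
    dotProduct_transpose_mul_mul_mulVec]
  linarith [dotProduct_mulVec_complete_square hK hρ c (Φ *ᵥ (α - β))]

lemma svmLagrangian_le_of_feasible {K : Matrix m m ℝ} {Φ : Matrix m n ℝ} {y : n → ℝ}
    {c : m → ℝ} {ξ ζ α β : n → ℝ} (hfeas : SvmPrimalFeasible ε K Φ y c ξ ζ)
    (hα : α ∈ Set.Icc 0 1) (hβ : β ∈ Set.Icc 0 1) :
    svmLagrangian ε ρ K Φ y c α β ≤ ∑ i, (ξ i + ζ i) + ρ * (c ⬝ᵥ K *ᵥ c) := by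
  have hmul {x a b : ℝ} (hx : x ∈ Set.Icc (0 : ℝ) 1) (hab : a ≤ b) (hb : 0 ≤ b) : x * a ≤ b :=
    (mul_le_mul_of_nonneg_left hab hx.1).trans (mul_le_of_le_one_left hb hx.2)
  refine add_le_add_left (sum_le_sum fun i _ => ?_) _
  obtain ⟨hξ, hξ₀, hζ, hζ₀⟩ := hfeas i
  exact add_le_add (hmul ⟨hα.1 i, hα.2 i⟩ hξ hξ₀) (hmul ⟨hβ.1 i, hβ.2 i⟩ hζ hζ₀)

lemma neg_svmDualObjective_le_svmLagrangian {K : Matrix m m ℝ} (hK : K.PosSemidef) (hρ : 0 < ρ)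
    (Φ : Matrix m n ℝ) (y : n → ℝ) (c : m → ℝ) (α β : n → ℝ) :
    -svmDualObjective ε ρ (Φᵀ * K * Φ) y α β ≤ svmLagrangian ε ρ K Φ y c α β := by
  rw [svmLagrangian_eq (isHermitian_iff_isSymm.mp hK.isHermitian) hρ.ne']
  have := hK.dotProduct_mulVec_nonneg ((2 * ρ) • c - Φ *ᵥ (α - β))
  rw [star_trivial] at this
  have : 0 < 1 / (4 * ρ) := by positivity
  nlinarith

lemma svmLagrangian_smul_mulVec {K : Matrix m m ℝ} (hK : K.IsSymm) (hρ : ρ ≠ 0)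
    (Φ : Matrix m n ℝ) (y α β : n → ℝ) :
    svmLagrangian ε ρ K Φ y ((2 * ρ)⁻¹ • Φ *ᵥ (α - β)) α β =
      -svmDualObjective ε ρ (Φᵀ * K * Φ) y α β := by
  rw [svmLagrangian_eq hK hρ, smul_inv_smul₀ (mul_ne_zero two_ne_zero hρ), sub_self]
  simp

lemma svmLagrangian_mem_svmPrimalValues {K : Matrix m m ℝ} {Φ : Matrix m n ℝ} {y : n → ℝ}
    {c : m → ℝ} {α β : n → ℝ}
    (hslack : ∀ i, α i * (y i - ((Φᵀ * K) *ᵥ c) i - ε) = max (y i - ((Φᵀ * K) *ᵥ c) i - ε) 0 ∧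
      β i * (-(y i) + ((Φᵀ * K) *ᵥ c) i - ε) = max (-(y i) + ((Φᵀ * K) *ᵥ c) i - ε) 0) :
    svmLagrangian ε ρ K Φ y c α β ∈ svmPrimalValues ε ρ K Φ y :=
  ⟨c, fun i => max (y i - ((Φᵀ * K) *ᵥ c) i - ε) 0,
    fun i => max (-(y i) + ((Φᵀ * K) *ᵥ c) i - ε) 0, by simp only [svmLagrangian, hslack],
    fun _ => ⟨le_max_left _ _, le_max_right _ _, le_max_left _ _, le_max_right _ _⟩⟩

lemma svmDualObjective_add_single_left [DecidableEq n] {K₀ : Matrix n n ℝ} (hK₀ : K₀.IsSymm)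
    (hρ : ρ ≠ 0) (y α β : n → ℝ) (i : n) (s : ℝ) :
    svmDualObjective ε ρ K₀ y (α + Pi.single i s) β = svmDualObjective ε ρ K₀ y α β +
      1 / (4 * ρ) * K₀ i i * s ^ 2 - (y i - (2 * ρ)⁻¹ * (K₀ *ᵥ (α - β)) i - ε) * s := by
  have hsub : α + Pi.single i s - β = α - β + Pi.single i s := add_sub_right_comm _ _ _
  rw [svmDualObjective, svmDualObjective, hsub, add_single_dotProduct_mulVec_add_single hK₀,
    dotProduct_add, dotProduct_single]
  field_simp
  ring

lemma svmDualObjective_add_single_right [DecidableEq n] {K₀ : Matrix n n ℝ} (hK₀ : K₀.IsSymm)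
    (hρ : ρ ≠ 0) (y α β : n → ℝ) (i : n) (s : ℝ) :
    svmDualObjective ε ρ K₀ y α (β + Pi.single i s) = svmDualObjective ε ρ K₀ y α β +
      1 / (4 * ρ) * K₀ i i * s ^ 2 - (-(y i) + (2 * ρ)⁻¹ * (K₀ *ᵥ (α - β)) i - ε) * s := by
  have hsub : α - (β + Pi.single i s) = α - β + Pi.single i (-s) := by
    rw [Pi.single_neg]; abel
  rw [svmDualObjective, svmDualObjective, hsub, add_single_dotProduct_mulVec_add_single hK₀,
    dotProduct_add, dotProduct_single]
  field_simp
  ring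

lemma exists_isMinOn_svmDualObjective (ε ρ : ℝ) (K₀ : Matrix n n ℝ) (y : n → ℝ) :
    ∃ p ∈ Set.Icc (0 : n → ℝ) 1 ×ˢ Set.Icc (0 : n → ℝ) 1,
      IsMinOn (fun p => svmDualObjective ε ρ K₀ y p.1 p.2) (Set.Icc 0 1 ×ˢ Set.Icc 0 1) p := by
  refine (isCompact_Icc.prod isCompact_Icc).exists_isMinOn
    ((Set.nonempty_Icc.2 zero_le_one).prod (Set.nonempty_Icc.2 zero_le_one))
    (Continuous.continuousOn ?_)
  unfold svmDualObjective
  fun_prop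

lemma svmDualObjective_slackness [DecidableEq n] {K₀ : Matrix n n ℝ} (hK₀ : K₀.PosSemidef)
    (hρ : 0 < ρ) {y α β : n → ℝ} (hα : α ∈ Set.Icc 0 1) (hβ : β ∈ Set.Icc 0 1)
    (hmin : IsMinOn (fun p => svmDualObjective ε ρ K₀ y p.1 p.2) (Set.Icc 0 1 ×ˢ Set.Icc 0 1)
      (α, β)) (i : n) :
    α i * (y i - (2 * ρ)⁻¹ * (K₀ *ᵥ (α - β)) i - ε) =
        max (y i - (2 * ρ)⁻¹ * (K₀ *ᵥ (α - β)) i - ε) 0 ∧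
      β i * (-(y i) + (2 * ρ)⁻¹ * (K₀ *ᵥ (α - β)) i - ε) =
        max (-(y i) + (2 * ρ)⁻¹ * (K₀ *ᵥ (α - β)) i - ε) 0 := by
  have hK₀s : K₀.IsSymm := isHermitian_iff_isSymm.mp hK₀.isHermitian
  have ha : 0 ≤ 1 / (4 * ρ) * K₀ i i := mul_nonneg (by positivity) hK₀.diag_nonneg
  constructor
  · refine mul_eq_max_zero_of_forall_mul_sq_sub_mul_nonneg ha ⟨hα.1 i, hα.2 i⟩ fun s hs => ?_
    have : svmDualObjective ε ρ K₀ y α β ≤ svmDualObjective ε ρ K₀ y (α + Pi.single i s) β :=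
      hmin (Set.mk_mem_prod (Pi.add_single_mem_Icc hα hs) hβ)
    rw [svmDualObjective_add_single_left hK₀s hρ.ne'] at this
    linarith
  · refine mul_eq_max_zero_of_forall_mul_sq_sub_mul_nonneg ha ⟨hβ.1 i, hβ.2 i⟩ fun s hs => ?_
    have : svmDualObjective ε ρ K₀ y α β ≤ svmDualObjective ε ρ K₀ y α (β + Pi.single i s) :=
      hmin (Set.mk_mem_prod hα (Pi.add_single_mem_Icc hβ hs))
    rw [svmDualObjective_add_single_right hK₀s hρ.ne'] at this
    linarith

lemma isLeast_svmDualValues {K₀ : Matrix n n ℝ} {y α β : n → ℝ} (hα : α ∈ Set.Icc 0 1)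
    (hβ : β ∈ Set.Icc 0 1)
    (hmin : IsMinOn (fun p => svmDualObjective ε ρ K₀ y p.1 p.2) (Set.Icc 0 1 ×ˢ Set.Icc 0 1)
      (α, β)) :
    IsLeast (svmDualValues ε ρ K₀ y) (svmDualObjective ε ρ K₀ y α β) := by
  refine ⟨⟨α, β, rfl, fun i => ⟨hα.1 i, hα.2 i⟩, fun i => ⟨hβ.1 i, hβ.2 i⟩⟩, ?_⟩
  rintro _ ⟨α', β', rfl, hα', hβ'⟩
  exact hmin (Set.mk_mem_prod ⟨fun i => (hα' i).1, fun i => (hα' i).2⟩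
    ⟨fun i => (hβ' i).1, fun i => (hβ' i).2⟩)

lemma isLeast_svmPrimalValues [DecidableEq n] {K : Matrix m m ℝ} (hK : K.PosSemidef)
    (hρ : 0 < ρ) (Φ : Matrix m n ℝ) {y α β : n → ℝ} (hα : α ∈ Set.Icc 0 1)
    (hβ : β ∈ Set.Icc 0 1)
    (hmin : IsMinOn (fun p => svmDualObjective ε ρ (Φᵀ * K * Φ) y p.1 p.2)
      (Set.Icc 0 1 ×ˢ Set.Icc 0 1) (α, β)) :
    IsLeast (svmPrimalValues ε ρ K Φ y) (-svmDualObjective ε ρ (Φᵀ * K * Φ) y α β) := by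
  refine ⟨?_, ?_⟩
  · rw [← svmLagrangian_smul_mulVec (isHermitian_iff_isSymm.mp hK.isHermitian) hρ.ne' Φ y α β]
    refine svmLagrangian_mem_svmPrimalValues fun i => ?_
    have hK₀ : (Φᵀ * K * Φ).PosSemidef := by
      simpa [conjTranspose_eq_transpose_of_trivial] using hK.conjTranspose_mul_mul_same Φ
    simpa [mulVec_smul, mulVec_mulVec] using svmDualObjective_slackness hK₀ hρ hα hβ hmin i
  · rintro _ ⟨c, ξ, ζ, rfl, hfeas⟩
    exact (neg_svmDualObjective_le_svmLagrangian hK hρ Φ y c α β).trans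
      (svmLagrangian_le_of_feasible hfeas hα hβ)

end SVM

theorem svm_strong_duality_general
    (D N : ℕ) (ε ρ : ℝ) (hρ : 0 < ρ)
    (K : Matrix (Fin D) (Fin D) ℝ) (hK : K.PosSemidef)
    (Φ₀ : Matrix (Fin D) (Fin N) ℝ) (y : Fin N → ℝ) :
    sInf {v : ℝ | ∃ (c : Fin D → ℝ) (ξ ζ : Fin N → ℝ),
        v = (∑ n, (ξ n + ζ n)) + ρ * (c ⬝ᵥ K.mulVec c) ∧
        ∀ n, y n - (Φ₀ᵀ * K).mulVec c n - ε ≤ ξ n ∧ 0 ≤ ξ n ∧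
          -(y n) + (Φ₀ᵀ * K).mulVec c n - ε ≤ ζ n ∧ 0 ≤ ζ n} =
    -sInf {v : ℝ | ∃ α β : Fin N → ℝ,
        v = (1 / (4 * ρ)) * ((α - β) ⬝ᵥ (Φ₀ᵀ * K * Φ₀).mulVec (α - β))
          - (fun n => y n - ε) ⬝ᵥ α + (fun n => y n + ε) ⬝ᵥ β ∧
        (∀ n, 0 ≤ α n ∧ α n ≤ 1) ∧ (∀ n, 0 ≤ β n ∧ β n ≤ 1)} := by
  obtain ⟨⟨α, β⟩, ⟨hα, hβ⟩, hmin⟩ := exists_isMinOn_svmDualObjective ε ρ (Φ₀ᵀ * K * Φ₀) y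
  exact (isLeast_svmPrimalValues hK hρ Φ₀ hα hβ hmin).csInf_eq.trans
    (congrArg Neg.neg (isLeast_svmDualValues hα hβ hmin).csInf_eq.symm)

/-- Strong duality between the primal SVM-type quadratic program (9) and its dual (10):
the primal optimal value equals the negative of the dual optimal value. -/
theorem svm_strong_duality
    (D N : ℕ) (hD : 0 < D) (hN : 0 < N) (ε ρ : ℝ) (hε : 0 ≤ ε) (hρ : 0 < ρ)
    (K : Matrix (Fin D) (Fin D) ℝ) (hK : K.PosSemidef)
    (Φ₀ : Matrix (Fin D) (Fin N) ℝ) (y : Fin N → ℝ) :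
    sInf {v : ℝ | ∃ (c : Fin D → ℝ) (ξ ζ : Fin N → ℝ),
        v = (∑ n, (ξ n + ζ n)) + ρ * (c ⬝ᵥ K.mulVec c) ∧
        ∀ n, y n - (Φ₀ᵀ * K).mulVec c n - ε ≤ ξ n ∧ 0 ≤ ξ n ∧
          -(y n) + (Φ₀ᵀ * K).mulVec c n - ε ≤ ζ n ∧ 0 ≤ ζ n} =
    -sInf {v : ℝ | ∃ α β : Fin N → ℝ,
        v = (1 / (4 * ρ)) * ((α - β) ⬝ᵥ (Φ₀ᵀ * K * Φ₀).mulVec (α - β))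
          - (fun n => y n - ε) ⬝ᵥ α + (fun n => y n + ε) ⬝ᵥ β ∧
        (∀ n, 0 ≤ α n ∧ α n ≤ 1) ∧ (∀ n, 0 ≤ β n ∧ β n ≤ 1)} :=
  svm_strong_duality_general D N ε ρ hρ K hK Φ₀ y
end

section
/- Let H be a real inner product space, T a positive integer, λ > 0, B ≥ 0, ε ≥ 0, and for t = 1,…,T let v_t ∈ H with ‖v_t‖ ≤ B and y_t ∈ ℝ. Define F : H → ℝ by F(w) = (1/T) ∑_{t=1}^T max(0, |y_t − ⟨w, v_t⟩| − ε) + λ‖w‖². If g ∈ H satisfies F(g) ≤ F(w) for all w ∈ H, then ‖g‖ ≤ B/(2λ). -/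
open scoped RealInnerProductSpace

/-- Norm bound on the minimizer of the regularized empirical risk: if g minimizes
F(w) = (1/T)∑ₜ max(0, |yₜ − ⟨w, vₜ⟩| − ε) + λ‖w‖² with ‖vₜ‖ ≤ B, then ‖g‖ ≤ B/(2λ). -/
theorem batch_minimizer_norm_bound
    {H : Type*} [NormedAddCommGroup H] [InnerProductSpace ℝ H]
    (T : ℕ) (hT : 0 < T) (lam B ε : ℝ) (hlam : 0 < lam) (hB : 0 ≤ B) (hε : 0 ≤ ε)
    (v : Fin T → H) (y : Fin T → ℝ) (hv : ∀ t, ‖v t‖ ≤ B)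
    (g : H)
    (hmin : ∀ w : H,
      (1 / (T : ℝ)) * (∑ t, max 0 (|y t - ⟪g, v t⟫| - ε)) + lam * ‖g‖ ^ 2 ≤
      (1 / (T : ℝ)) * (∑ t, max 0 (|y t - ⟪w, v t⟫| - ε)) + lam * ‖w‖ ^ 2) :
    ‖g‖ ≤ B / (2 * lam) := by
  have hTpos : (0 : ℝ) < (T : ℝ) := by exact_mod_cast hT
  -- key inequality: for all 0 < s ≤ 1, lam * (2 - s) * ‖g‖^2 ≤ B * ‖g‖
  have key : ∀ s : ℝ, 0 < s → s ≤ 1 → lam * (2 - s) * ‖g‖ ^ 2 ≤ B * ‖g‖ := by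
    intro s hs hs1
    have h := hmin ((1 - s) • g)
    have hnorm : ‖(1 - s) • g‖ = (1 - s) * ‖g‖ := by
      rw [norm_smul, Real.norm_eq_abs, abs_of_nonneg (by linarith)]
    -- pointwise bound
    have hpt : ∀ t, max 0 (|y t - ⟪(1 - s) • g, v t⟫| - ε) ≤
        max 0 (|y t - ⟪g, v t⟫| - ε) + s * (B * ‖g‖) := by
      intro t
      have hin : ⟪(1 - s) • g, v t⟫ = (1 - s) * ⟪g, v t⟫ := real_inner_smul_left _ _ _
      have habs : |⟪g, v t⟫| ≤ ‖g‖ * ‖v t‖ := abs_real_inner_le_norm _ _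
      have hvB : ‖v t‖ ≤ B := hv t
      have hib : |⟪g, v t⟫| ≤ B * ‖g‖ := by
        calc |⟪g, v t⟫| ≤ ‖g‖ * ‖v t‖ := habs
          _ ≤ B * ‖g‖ := by nlinarith [norm_nonneg g, norm_nonneg (v t)]
      have h1 : |y t - ⟪(1 - s) • g, v t⟫| ≤ |y t - ⟪g, v t⟫| + s * |⟪g, v t⟫| := by
        rw [hin]
        have : y t - (1 - s) * ⟪g, v t⟫ = (y t - ⟪g, v t⟫) + s * ⟪g, v t⟫ := by ring
        rw [this]
        calc |(y t - ⟪g, v t⟫) + s * ⟪g, v t⟫| ≤ |y t - ⟪g, v t⟫| + |s * ⟪g, v t⟫| :=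
              abs_add_le _ _
          _ = |y t - ⟪g, v t⟫| + s * |⟪g, v t⟫| := by
              rw [abs_mul, abs_of_pos hs]
      have hc : 0 ≤ s * (B * ‖g‖) := by positivity
      have hc2 : s * |⟪g, v t⟫| ≤ s * (B * ‖g‖) := by nlinarith
      rcases le_total (|y t - ⟪(1 - s) • g, v t⟫| - ε) 0 with hle | hge
      · rw [max_eq_left hle]
        positivity
      · rw [max_eq_right hge]
        have : |y t - ⟪g, v t⟫| - ε ≤ max 0 (|y t - ⟪g, v t⟫| - ε) := le_max_right _ _
        linarith
    have hsum : (∑ t, max 0 (|y t - ⟪(1 - s) • g, v t⟫| - ε)) ≤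
        (∑ t, max 0 (|y t - ⟪g, v t⟫| - ε)) + (T : ℝ) * (s * (B * ‖g‖)) := by
      calc (∑ t, max 0 (|y t - ⟪(1 - s) • g, v t⟫| - ε))
          ≤ ∑ t, (max 0 (|y t - ⟪g, v t⟫| - ε) + s * (B * ‖g‖)) :=
            Finset.sum_le_sum fun t _ => hpt t
        _ = (∑ t, max 0 (|y t - ⟪g, v t⟫| - ε)) + (T : ℝ) * (s * (B * ‖g‖)) := by
            rw [Finset.sum_add_distrib, Finset.sum_const, Finset.card_univ,
              Fintype.card_fin, nsmul_eq_mul]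
    rw [hnorm] at h
    have hT' : (1 / (T : ℝ)) * ((T : ℝ) * (s * (B * ‖g‖))) = s * (B * ‖g‖) := by
      field_simp
    nlinarith [mul_le_mul_of_nonneg_left hsum (le_of_lt (by positivity : (0:ℝ) < 1 / (T:ℝ)))]
  -- deduce 2 * lam * ‖g‖^2 ≤ B * ‖g‖
  have h2 : 2 * lam * ‖g‖ ^ 2 ≤ B * ‖g‖ := by
    rcases eq_or_lt_of_le (norm_nonneg g) with hg0 | hgpos
    · rw [← hg0]; ring_nf; positivity
    · apply le_of_forall_pos_le_add
      intro δ hδ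
      set s := min 1 (δ / (lam * ‖g‖ ^ 2)) with hsdef
      have hden : 0 < lam * ‖g‖ ^ 2 := by positivity
      have hs : 0 < s := lt_min one_pos (by positivity)
      have hs1 : s ≤ 1 := min_le_left _ _
      have hk := key s hs hs1
      have : s * (lam * ‖g‖ ^ 2) ≤ δ := by
        have : s ≤ δ / (lam * ‖g‖ ^ 2) := min_le_right _ _
        calc s * (lam * ‖g‖ ^ 2) ≤ (δ / (lam * ‖g‖ ^ 2)) * (lam * ‖g‖ ^ 2) := by
              nlinarith
          _ = δ := by field_simp
      nlinarith
  rcases eq_or_lt_of_le (norm_nonneg g) with hg0 | hgpos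
  · rw [← hg0]; positivity
  · rw [le_div_iff₀ (by positivity)]
    nlinarith
end

section
/- (Theorem 1, online regret bound.) Let H be a real inner product space, λ > 0, B > 0, ε ≥ 0, and μ > 0 with 2μλ ≤ 1. For each integer t ≥ 1 let v_t ∈ H with ‖v_t‖ ≤ B and y_t ∈ ℝ, set μ_t := μ t^{−1/2}, s(e) := (sign(e − ε) + sign(e + ε))/2, and define the iterates w_1 = 0 and w_{t+1} = (1 − 2μ_t λ) w_t + μ_t s(y_t − ⟨w_t, v_t⟩) v_t. Define the instantaneous cost C_t(w) := max(0, |y_t − ⟨w, v_t⟩| − ε) + λ‖w‖². Then for every integer T ≥ 1 and every g ∈ H with ‖g‖ ≤ B/(2λ), (1/T) ∑_{t=1}^T C_t(w_t) ≤ (1/T) ∑_{t=1}^T C_t(g) + a₁/√T + a₂/T, where a₂ := B²/(8λ²μ) and a₁ := 4(B²μ + a₂). -/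
open scoped RealInnerProductSpace
open Finset

private lemma sgn_mul_self' (x : ℝ) : Real.sign x * x = |x| := by
  rcases lt_trichotomy x 0 with h|h|h
  · rw [Real.sign_of_neg h, abs_of_neg h]; ring
  · simp [h]
  · rw [Real.sign_of_pos h, abs_of_pos h]; ring

private lemma sgn_mul_le' (x y : ℝ) : Real.sign x * y ≤ |y| := by
  rcases lt_trichotomy x 0 with h|h|h
  · rw [Real.sign_of_neg h]; linarith [neg_abs_le y]
  · simp [h, abs_nonneg]
  · rw [Real.sign_of_pos h]; linarith [le_abs_self y]

private lemma abs_sgn_le' (x : ℝ) : |Real.sign x| ≤ 1 := by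
  rcases lt_trichotomy x 0 with h|h|h
  · simp [Real.sign_of_neg h]
  · simp [h]
  · simp [Real.sign_of_pos h]

private lemma Lrepr' (ε : ℝ) (hε : 0 ≤ ε) (e : ℝ) :
    max 0 (|e| - ε) = (|e - ε| + |e + ε|) / 2 - ε := by
  rcases le_total ε e with h|h
  · rw [abs_of_nonneg (by linarith), abs_of_nonneg (by linarith), abs_of_nonneg (by linarith),
      max_eq_right (by linarith)]
    ring
  · rcases le_total e (-ε) with h2|h2
    · rw [abs_of_nonpos (by linarith), abs_of_nonpos (by linarith), abs_of_nonpos (by linarith),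
        max_eq_right (by linarith)]
      ring
    · rw [show |e - ε| = ε - e by rw [abs_of_nonpos (by linarith)]; ring,
        show |e + ε| = e + ε from abs_of_nonneg (by linarith),
        max_eq_left (by rw [sub_nonpos]; exact abs_le.mpr ⟨by linarith, by linarith⟩)]
      ring

private lemma subgrad' (ε : ℝ) (hε : 0 ≤ ε) (e e' : ℝ) :
    max 0 (|e| - ε) + ((Real.sign (e - ε) + Real.sign (e + ε)) / 2) * (e' - e) ≤
      max 0 (|e'| - ε) := by
  rw [Lrepr' ε hε e, Lrepr' ε hε e']
  have ha := sgn_mul_self' (e - ε)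
  have hb := sgn_mul_self' (e + ε)
  have h1 := sgn_mul_le' (e - ε) (e' - ε)
  have h2 := sgn_mul_le' (e + ε) (e' + ε)
  nlinarith [ha, hb, h1, h2]

private lemma telescope' (α D : ℕ → ℝ) (M : ℝ)
    (hα0 : ∀ t, 1 ≤ t → 0 ≤ α t) (hαmono : ∀ t, 1 ≤ t → α t ≤ α (t+1))
    (hDM : ∀ t, 1 ≤ t → D t ≤ M) :
    ∀ T, 1 ≤ T → ∑ t ∈ Icc 1 T, α t * (D t - D (t+1)) ≤ α T * (M - D (T+1)) := by
  intro T hT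
  induction T, hT using Nat.le_induction with
  | base =>
    simp only [Finset.Icc_self, Finset.sum_singleton]
    exact mul_le_mul_of_nonneg_left (by linarith [hDM 1 le_rfl]) (hα0 1 le_rfl)
  | succ n hn ih =>
    rw [Finset.sum_Icc_succ_top (by omega : 1 ≤ n+1)]
    have h1 : α n * (M - D (n+1)) ≤ α (n+1) * (M - D (n+1)) :=
      mul_le_mul_of_nonneg_right (hαmono n hn) (by linarith [hDM (n+1) (by omega)])
    nlinarith [ih, h1]

private lemma invsqrt_sum' : ∀ T : ℕ, ∑ t ∈ Icc 1 T, (1 / Real.sqrt t) ≤ 2 * Real.sqrt T := by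
  intro T
  induction T with
  | zero => simp
  | succ n ih =>
    rw [Finset.sum_Icc_succ_top (by omega : 1 ≤ n+1)]
    have h0 : (0:ℝ) ≤ n := Nat.cast_nonneg n
    have hs : (0:ℝ) < Real.sqrt ((n:ℝ)+1) := Real.sqrt_pos.mpr (by linarith)
    have hn : Real.sqrt n ^ 2 = (n:ℝ) := Real.sq_sqrt h0
    have hn1 : Real.sqrt ((n:ℝ)+1) ^ 2 = (n:ℝ)+1 := Real.sq_sqrt (by linarith)
    have key : 1 / Real.sqrt ((n:ℝ)+1) ≤ 2 * Real.sqrt ((n:ℝ)+1) - 2 * Real.sqrt n := by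
      rw [div_le_iff₀ hs]
      nlinarith [sq_nonneg (Real.sqrt n - Real.sqrt ((n:ℝ)+1)), Real.sqrt_nonneg (n:ℝ)]
    push_cast
    linarith [ih, key]

private lemma scalar_e1' (s m c D1 D2 I Z : ℝ) (hs : s ≠ 0) (hm : m ≠ 0)
    (hc : c = m / s) (hD : D2 = D1 - 2 * c * I + c ^ 2 * Z) :
    s / (2 * m) * (D1 - D2) = I - (c / 2) * Z := by
  subst hc
  subst hD
  field_simp
  ring

private lemma abs_s_le' (ε a : ℝ) : |(Real.sign (a - ε) + Real.sign (a + ε)) / 2| ≤ 1 := by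
  have h1 := abs_sgn_le' (a - ε)
  have h2 := abs_sgn_le' (a + ε)
  have h3 := abs_add_le (Real.sign (a - ε)) (Real.sign (a + ε))
  rw [abs_div, abs_two]
  linarith

private lemma one_le_sqrt' {t : ℕ} (ht : 1 ≤ t) : (1:ℝ) ≤ Real.sqrt t := by
  have : Real.sqrt 1 ≤ Real.sqrt t := Real.sqrt_le_sqrt (by exact_mod_cast ht)
  simpa using this

set_option maxHeartbeats 2000000 in
/-- Theorem 1 (online regret bound): the stochastic subgradient iterates with learning
rate μₜ = μ/√t for the ε-insensitive instantaneous regularized cost satisfy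
(1/T)∑ₜ Cₜ(wₜ) ≤ (1/T)∑ₜ Cₜ(g) + a₁/√T + a₂/T for every comparator g with
‖g‖ ≤ B/(2λ), where a₂ = B²/(8λ²μ) and a₁ = 4(B²μ + a₂). -/
theorem online_regret_bound
    {H : Type*} [NormedAddCommGroup H] [InnerProductSpace ℝ H]
    (lam B ε μ : ℝ) (hlam : 0 < lam) (hB : 0 < B) (hε : 0 ≤ ε)
    (hμ : 0 < μ) (hμlam : 2 * μ * lam ≤ 1)
    (v : ℕ → H) (y : ℕ → ℝ) (hv : ∀ t, 1 ≤ t → ‖v t‖ ≤ B)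
    (w : ℕ → H) (hw1 : w 1 = 0)
    (hrec : ∀ t, 1 ≤ t → w (t + 1) =
      (1 - 2 * (μ / Real.sqrt t) * lam) • w t +
        ((μ / Real.sqrt t) *
          ((Real.sign (y t - ⟪w t, v t⟫ - ε) + Real.sign (y t - ⟪w t, v t⟫ + ε)) / 2)) • v t) :
    ∀ T : ℕ, 1 ≤ T → ∀ g : H, ‖g‖ ≤ B / (2 * lam) →
      (1 / (T : ℝ)) * ∑ t ∈ Icc 1 T, (max 0 (|y t - ⟪w t, v t⟫| - ε) + lam * ‖w t‖ ^ 2) ≤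
        (1 / (T : ℝ)) * ∑ t ∈ Icc 1 T, (max 0 (|y t - ⟪g, v t⟫| - ε) + lam * ‖g‖ ^ 2) +
          (4 * (B ^ 2 * μ + B ^ 2 / (8 * lam ^ 2 * μ))) / Real.sqrt T +
          (B ^ 2 / (8 * lam ^ 2 * μ)) / T := by
  -- name the subgradient scalar opaquely
  obtain ⟨sg, hsgt⟩ : ∃ sg : ℕ → ℝ, ∀ t, sg t =
      (Real.sign (y t - ⟪w t, v t⟫ - ε) + Real.sign (y t - ⟪w t, v t⟫ + ε)) / 2 :=
    ⟨_, fun t => rfl⟩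
  simp only [← hsgt] at hrec
  have hsgb : ∀ t, |sg t| ≤ 1 := fun t => by rw [hsgt]; exact abs_s_le' ε _
  -- bound on the iterates
  have hwb : ∀ t, 1 ≤ t → ‖w t‖ ≤ B / (2 * lam) := by
    intro t ht
    induction t, ht using Nat.le_induction with
    | base => rw [hw1]; simp; positivity
    | succ n hn ih =>
      rw [hrec n hn]
      have hst := one_le_sqrt' hn
      have hst0 : (0:ℝ) < Real.sqrt n := by linarith
      have hc0 : 0 < μ / Real.sqrt n := by positivity
      have hcμ : μ / Real.sqrt n ≤ μ := div_le_self hμ.le hst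
      have h1 : 0 ≤ 1 - 2 * (μ / Real.sqrt n) * lam := by nlinarith
      have hb1 : ‖(1 - 2 * (μ / Real.sqrt n) * lam) • w n‖ ≤
          (1 - 2 * (μ / Real.sqrt n) * lam) * (B / (2 * lam)) := by
        rw [norm_smul, Real.norm_eq_abs, abs_of_nonneg h1]
        exact mul_le_mul_of_nonneg_left ih h1
      have hb2 : ‖((μ / Real.sqrt n) * sg n) • v n‖ ≤ (μ / Real.sqrt n) * B := by
        rw [norm_smul, Real.norm_eq_abs, abs_mul, abs_of_nonneg hc0.le]
        have := mul_le_mul (mul_le_mul_of_nonneg_left (hsgb n) hc0.le)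
          (hv n hn) (norm_nonneg _) (by positivity)
        calc μ / Real.sqrt n * |sg n| * ‖v n‖ ≤ μ / Real.sqrt n * 1 * B := this
          _ = (μ / Real.sqrt n) * B := by ring
      have heq : (1 - 2 * (μ / Real.sqrt n) * lam) * (B / (2 * lam)) +
          (μ / Real.sqrt n) * B = B / (2 * lam) := by
        field_simp
        ring
      calc ‖(1 - 2 * (μ / Real.sqrt n) * lam) • w n + ((μ / Real.sqrt n) * sg n) • v n‖
          ≤ ‖(1 - 2 * (μ / Real.sqrt n) * lam) • w n‖ + ‖((μ / Real.sqrt n) * sg n) • v n‖ :=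
            norm_add_le _ _
        _ ≤ (1 - 2 * (μ / Real.sqrt n) * lam) * (B / (2 * lam)) + (μ / Real.sqrt n) * B :=
            add_le_add hb1 hb2
        _ = B / (2 * lam) := heq
  intro T hT g hg
  -- per-step inequality
  have key : ∀ t, 1 ≤ t →
      (max 0 (|y t - ⟪w t, v t⟫| - ε) + lam * ‖w t‖ ^ 2) ≤
        (max 0 (|y t - ⟪g, v t⟫| - ε) + lam * ‖g‖ ^ 2) +
        (Real.sqrt t / (2 * μ)) * (‖w t - g‖ ^ 2 - ‖w (t+1) - g‖ ^ 2) +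
        2 * B ^ 2 * (μ / Real.sqrt t) := by
    intro t ht
    have hst := one_le_sqrt' ht
    have hst0 : (0:ℝ) < Real.sqrt t := by linarith
    obtain ⟨c, hc⟩ : ∃ c : ℝ, c = μ / Real.sqrt t := ⟨_, rfl⟩
    have hc0 : 0 < c := by rw [hc]; positivity
    obtain ⟨z, hz⟩ : ∃ z : H, z = (2 * lam) • w t - (sg t) • v t := ⟨_, rfl⟩
    have hwt1 : w (t + 1) = w t - c • z := by
      rw [hrec t ht, hz, hc]
      module
    have hD : ‖w (t+1) - g‖ ^ 2 = ‖w t - g‖ ^ 2 - 2 * c * ⟪z, w t - g⟫ + c ^ 2 * ‖z‖ ^ 2 := by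
      rw [hwt1, show w t - c • z - g = (w t - g) - c • z by abel, norm_sub_sq_real,
        real_inner_smul_right, norm_smul, Real.norm_eq_abs, abs_of_nonneg hc0.le,
        real_inner_comm (w t - g) z]
      ring
    -- norm bound on the subgradient
    have hzn : ‖z‖ ≤ 2 * B := by
      have hb1 : ‖(2 * lam) • w t‖ ≤ 2 * lam * (B / (2 * lam)) := by
        rw [norm_smul, Real.norm_eq_abs, abs_of_nonneg (by positivity)]
        exact mul_le_mul_of_nonneg_left (hwb t ht) (by positivity)
      have hb2 : ‖(sg t) • v t‖ ≤ B := by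
        rw [norm_smul, Real.norm_eq_abs]
        calc |sg t| * ‖v t‖ ≤ 1 * B :=
              mul_le_mul (hsgb t) (hv t ht) (norm_nonneg _) zero_le_one
          _ = B := one_mul B
      have heq : 2 * lam * (B / (2 * lam)) = B := by field_simp
      calc ‖z‖ = ‖(2 * lam) • w t - (sg t) • v t‖ := by rw [hz]
        _ ≤ ‖(2 * lam) • w t‖ + ‖(sg t) • v t‖ := norm_sub_le _ _
        _ ≤ 2 * lam * (B / (2 * lam)) + B := add_le_add hb1 hb2
        _ = 2 * B := by rw [heq]; ring
    have hZ : ‖z‖ ^ 2 ≤ 4 * B ^ 2 := by nlinarith [norm_nonneg z]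
    -- convexity subgradient inequality for the loss
    have hsub' : max 0 (|y t - ⟪w t, v t⟫| - ε) +
        sg t * ((y t - ⟪g, v t⟫) - (y t - ⟪w t, v t⟫)) ≤
        max 0 (|y t - ⟪g, v t⟫| - ε) := by
      rw [hsgt]
      exact subgrad' ε hε (y t - ⟪w t, v t⟫) (y t - ⟪g, v t⟫)
    -- convexity for the regularizer
    have hreg : lam * ‖w t‖ ^ 2 - lam * ‖g‖ ^ 2 ≤
        2 * lam * (⟪w t, w t⟫ - ⟪w t, g⟫) := by
      have h0 : (0:ℝ) ≤ ‖w t - g‖ ^ 2 := by positivity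
      rw [norm_sub_sq_real] at h0
      rw [real_inner_self_eq_norm_sq]
      nlinarith
    -- inner product expansion
    have hinner : ⟪z, w t - g⟫ =
        2 * lam * (⟪w t, w t⟫ - ⟪w t, g⟫) - sg t * (⟪v t, w t⟫ - ⟪v t, g⟫) := by
      rw [hz, inner_sub_left, real_inner_smul_left, real_inner_smul_left,
        inner_sub_right, inner_sub_right]
    have hcomm1 : ⟪v t, w t⟫ = ⟪w t, v t⟫ := real_inner_comm _ _
    have hcomm2 : ⟪v t, g⟫ = ⟪g, v t⟫ := real_inner_comm _ _
    have hfin : (max 0 (|y t - ⟪w t, v t⟫| - ε) + lam * ‖w t‖ ^ 2) -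
        (max 0 (|y t - ⟪g, v t⟫| - ε) + lam * ‖g‖ ^ 2) ≤ ⟪z, w t - g⟫ := by
      rw [hinner, hcomm1, hcomm2]
      nlinarith [hsub', hreg]
    -- convert the descent identity
    have e1 : (Real.sqrt t / (2 * μ)) * (‖w t - g‖ ^ 2 - ‖w (t+1) - g‖ ^ 2) =
        ⟪z, w t - g⟫ - (c / 2) * ‖z‖ ^ 2 :=
      scalar_e1' (Real.sqrt t) μ c _ _ _ _ hst0.ne' hμ.ne' hc hD
    have e2 : (c / 2) * ‖z‖ ^ 2 ≤ 2 * B ^ 2 * c := by nlinarith [hZ, hc0]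
    have e3 : 2 * B ^ 2 * c = 2 * B ^ 2 * (μ / Real.sqrt t) := by rw [hc]
    linarith [hfin, e1.ge, e2, e3.le, e3.ge]
  -- sum the per-step inequalities
  have hsum1 : ∑ t ∈ Icc 1 T, (max 0 (|y t - ⟪w t, v t⟫| - ε) + lam * ‖w t‖ ^ 2) ≤
      ∑ t ∈ Icc 1 T, ((max 0 (|y t - ⟪g, v t⟫| - ε) + lam * ‖g‖ ^ 2) +
        ((Real.sqrt t / (2 * μ)) * (‖w t - g‖ ^ 2 - ‖w (t+1) - g‖ ^ 2) +
         2 * B ^ 2 * (μ / Real.sqrt t))) := by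
    apply Finset.sum_le_sum
    intro t htm
    have ht1 : 1 ≤ t := (Finset.mem_Icc.mp htm).1
    linarith [key t ht1]
  rw [show ∀ f h k : ℕ → ℝ, ∑ t ∈ Icc 1 T, (f t + (h t + k t)) =
      ∑ t ∈ Icc 1 T, f t + (∑ t ∈ Icc 1 T, h t + ∑ t ∈ Icc 1 T, k t) from
      fun f h k => by rw [Finset.sum_add_distrib, Finset.sum_add_distrib]] at hsum1
  -- telescoping sum
  have htel := telescope' (fun t => Real.sqrt t / (2 * μ)) (fun t => ‖w t - g‖ ^ 2)
    (B ^ 2 / lam ^ 2)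
    (fun t _ => by positivity)
    (fun t _ => by
      have : Real.sqrt (t:ℝ) ≤ Real.sqrt ((t:ℝ)+1) := Real.sqrt_le_sqrt (by linarith)
      have h2 : ((t+1 : ℕ):ℝ) = (t:ℝ) + 1 := by push_cast; ring
      simp only [h2]
      apply div_le_div_of_nonneg_right this ?_ |>.trans_eq rfl
      · positivity)
    (fun t ht1 => by
      have h1 : ‖w t - g‖ ≤ B / lam := by
        have := norm_sub_le (w t) g
        have h2 := hwb t ht1
        have h3 : B / (2 * lam) + B / (2 * lam) = B / lam := by field_simp; ring
        linarith
      have h0 : (0:ℝ) ≤ B / lam := by positivity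
      calc ‖w t - g‖ ^ 2 ≤ (B / lam) ^ 2 := by nlinarith [norm_nonneg (w t - g)]
        _ = B ^ 2 / lam ^ 2 := by rw [div_pow])
    T hT
  have htel2 : ∑ t ∈ Icc 1 T, (Real.sqrt t / (2 * μ)) * (‖w t - g‖ ^ 2 - ‖w (t+1) - g‖ ^ 2) ≤
      (Real.sqrt T / (2 * μ)) * (B ^ 2 / lam ^ 2) := by
    refine htel.trans ?_
    have h1 : (0:ℝ) ≤ Real.sqrt T / (2 * μ) := by positivity
    have h2 : (0:ℝ) ≤ ‖w (T+1) - g‖ ^ 2 := by positivity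
    nlinarith
  -- step-size sum
  have hinv : ∑ t ∈ Icc 1 T, 2 * B ^ 2 * (μ / Real.sqrt t) ≤ 4 * B ^ 2 * μ * Real.sqrt T := by
    have h1 : ∑ t ∈ Icc 1 T, 2 * B ^ 2 * (μ / Real.sqrt t) =
        (2 * B ^ 2 * μ) * ∑ t ∈ Icc 1 T, (1 / Real.sqrt t) := by
      rw [Finset.mul_sum]
      apply Finset.sum_congr rfl
      intro t _
      ring
    rw [h1]
    have h2 := invsqrt_sum' T
    have h3 : (0:ℝ) ≤ 2 * B ^ 2 * μ := by positivity
    nlinarith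
  -- put everything together
  have hmain : ∑ t ∈ Icc 1 T, (max 0 (|y t - ⟪w t, v t⟫| - ε) + lam * ‖w t‖ ^ 2) ≤
      ∑ t ∈ Icc 1 T, (max 0 (|y t - ⟪g, v t⟫| - ε) + lam * ‖g‖ ^ 2) +
        ((Real.sqrt T / (2 * μ)) * (B ^ 2 / lam ^ 2) + 4 * B ^ 2 * μ * Real.sqrt T) := by
    linarith [hsum1, htel2, hinv]
  -- final arithmetic
  have hT0 : (0:ℝ) < T := by exact_mod_cast hT
  have hS1 : (1:ℝ) ≤ Real.sqrt T := one_le_sqrt' hT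
  have hS0 : (0:ℝ) < Real.sqrt T := by linarith
  have hS2 : Real.sqrt (T:ℝ) ^ 2 = (T:ℝ) := Real.sq_sqrt hT0.le
  obtain ⟨S, hS⟩ : ∃ S : ℝ, S = Real.sqrt T := ⟨_, rfl⟩
  have hK : (1 / (T:ℝ)) * ((Real.sqrt T / (2 * μ)) * (B ^ 2 / lam ^ 2) +
      4 * B ^ 2 * μ * Real.sqrt T) = (4 * (B ^ 2 * μ + B ^ 2 / (8 * lam ^ 2 * μ))) / Real.sqrt T := by
    rw [← hS]
    have hS0' : (0:ℝ) < S := by rw [hS]; exact hS0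
    have hTS : (T:ℝ) = S ^ 2 := by rw [hS]; exact hS2.symm
    rw [hTS]
    field_simp
    ring
  have ha2 : 0 ≤ (B ^ 2 / (8 * lam ^ 2 * μ)) / (T:ℝ) := by positivity
  calc (1 / (T:ℝ)) * ∑ t ∈ Icc 1 T, (max 0 (|y t - ⟪w t, v t⟫| - ε) + lam * ‖w t‖ ^ 2)
      ≤ (1 / (T:ℝ)) * (∑ t ∈ Icc 1 T, (max 0 (|y t - ⟪g, v t⟫| - ε) + lam * ‖g‖ ^ 2) +
          ((Real.sqrt T / (2 * μ)) * (B ^ 2 / lam ^ 2) + 4 * B ^ 2 * μ * Real.sqrt T)) :=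
        mul_le_mul_of_nonneg_left hmain (by positivity)
    _ = (1 / (T:ℝ)) * ∑ t ∈ Icc 1 T, (max 0 (|y t - ⟪g, v t⟫| - ε) + lam * ‖g‖ ^ 2) +
          (1 / (T:ℝ)) * ((Real.sqrt T / (2 * μ)) * (B ^ 2 / lam ^ 2) +
            4 * B ^ 2 * μ * Real.sqrt T) := by ring
    _ = (1 / (T:ℝ)) * ∑ t ∈ Icc 1 T, (max 0 (|y t - ⟪g, v t⟫| - ε) + lam * ‖g‖ ^ 2) +
          (4 * (B ^ 2 * μ + B ^ 2 / (8 * lam ^ 2 * μ))) / Real.sqrt T := by rw [hK]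
    _ ≤ _ := by linarith
end
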